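/- (Product formula for two-qubit observables.) Let t, t' ∈ ℝ, r, r', s, s' : Fin 3 → ℝ, and T, T' : Matrix (Fin 3) (Fin 3) ℝ, and set X := (t:ℂ) • (I₂ ⊗ I₂) + Σᵢ (rᵢ:ℂ) • (σᵢ ⊗ I₂) + Σⱼ (sⱼ:ℂ) • (I₂ ⊗ σⱼ) + Σᵢⱼ (Tᵢⱼ:ℂ) • (σᵢ ⊗ σⱼ), and X' analogously from (t',r',s',T'). Then X * X' = (t̃:ℂ) • (I₂ ⊗ I₂) + Σᵢ r̃ᵢ • (σᵢ ⊗ I₂) + Σⱼ s̃ⱼ • (I₂ ⊗ σⱼ) + Σᵢⱼ T̃ᵢⱼ • (σᵢ ⊗ σⱼ), where: t̃ = t·t' + ⟨r,r'⟩ + ⟨s,s'⟩ + ⟨T,T'⟩ ∈ ℝ; r̃ : Fin 3 → ℂ is the complexification of t'•r + t•r' + T'.mulVec s + T.mulVec s' plus Complex.I times the complexification of r × r' + Σ_{i=1}^{3} (T.mulVec eᵢ) × (T'.mulVec eᵢ); s̃ : Fin 3 → ℂ is the complexification of t'•s + t•s' + T'ᵀ.mulVec r + Tᵀ.mulVec r'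 plus Complex.I times the complexification of s × s' + Σ_{i=1}^{3} (Tᵀ.mulVec eᵢ) × (T'ᵀ.mulVec eᵢ); and T̃ : Matrix (Fin 3) (Fin 3) ℂ is the complexification of t'•T + t•T' + vecMulVec r s' + vecMulVec r' s − Ω(T,T') plus Complex.I times the complexification of Ψ(r,T',s) − Ψ(r',T,s'). Moreover, trace (X * X') = 4·(t·t' + ⟨r,r'⟩ + ⟨s,s'⟩ + ⟨T,T'⟩). -/
import Mathlib


open Matrix Kronecker

/-- The three Pauli matrices (indexed by `Fin 3`, so `pauli 0 = σ₁`, etc.). -/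
noncomputable def pauli : Fin 3 → Matrix (Fin 2) (Fin 2) ℂ :=
  ![!![0, 1; 1, 0], !![0, -Complex.I; Complex.I, 0], !![1, 0; 0, -1]]

/-- The basis `F₁, F₂, F₃` of antisymmetric `3 × 3` real matrices. -/
def Fmat : Fin 3 → Matrix (Fin 3) (Fin 3) ℝ :=
  ![!![0, 0, 0; 0, 0, 1; 0, -1, 0],
    !![0, 0, -1; 0, 0, 0; 1, 0, 0],
    !![0, 1, 0; -1, 0, 0; 0, 0, 0]]

/-- `x·F := x 0 • F₁ + x 1 • F₂ + x 2 • F₃`. -/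
def dotF (x : Fin 3 → ℝ) : Matrix (Fin 3) (Fin 3) ℝ :=
  x 0 • Fmat 0 + x 1 • Fmat 1 + x 2 • Fmat 2

/-- The symmetric bilinear matrix-valued map `Ω(M,N)`: its `i`-th row is
`r_{i+1}(M) × r_{i+2}(N) + r_{i+1}(N) × r_{i+2}(M)` (rows indexed cyclically). -/
def Omega (M N : Matrix (Fin 3) (Fin 3) ℝ) : Matrix (Fin 3) (Fin 3) ℝ :=
  Matrix.of fun i =>
    crossProduct (M (i + 1)) (N (i + 2)) + crossProduct (N (i + 1)) (M (i + 2))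

/-- `Ψ(x,M,y) := (x·F)ᵀ * M + M * (y·F)`. -/
def Psi (x : Fin 3 → ℝ) (M : Matrix (Fin 3) (Fin 3) ℝ) (y : Fin 3 → ℝ) :
    Matrix (Fin 3) (Fin 3) ℝ :=
  (dotF x)ᵀ * M + M * dotF y

/-- The two-qubit observable with Bloch data `(t, r, s, T)`. -/
noncomputable def obs (t : ℝ) (r s : Fin 3 → ℝ) (T : Matrix (Fin 3) (Fin 3) ℝ) :
    Matrix (Fin 2 × Fin 2) (Fin 2 × Fin 2) ℂ :=
  (t : ℂ) • ((1 : Matrix (Fin 2) (Fin 2) ℂ) ⊗ₖ (1 : Matrix (Fin 2) (Fin 2) ℂ))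
    + ∑ i, (r i : ℂ) • (pauli i ⊗ₖ (1 : Matrix (Fin 2) (Fin 2) ℂ))
    + ∑ j, (s j : ℂ) • ((1 : Matrix (Fin 2) (Fin 2) ℂ) ⊗ₖ pauli j)
    + ∑ i, ∑ j, (T i j : ℂ) • (pauli i ⊗ₖ pauli j)

set_option maxHeartbeats 8000000 in
theorem product_formula_two_qubit_observables
    (t t' : ℝ) (r r' s s' : Fin 3 → ℝ) (T T' : Matrix (Fin 3) (Fin 3) ℝ) :
    (obs t r s T * obs t' r' s' T' =
      ((t * t' + (∑ i, r i * r' i) + (∑ i, s i * s' i) + (Tᵀ * T').trace : ℝ) : ℂ) •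
          ((1 : Matrix (Fin 2) (Fin 2) ℂ) ⊗ₖ (1 : Matrix (Fin 2) (Fin 2) ℂ))
        + ∑ i, (((t' • r + t • r' + T'.mulVec s + T.mulVec s') i : ℂ)
              + Complex.I * ((crossProduct r r'
                  + ∑ k : Fin 3, crossProduct (T.mulVec (Pi.single k 1))
                      (T'.mulVec (Pi.single k 1))) i : ℂ)) •
            (pauli i ⊗ₖ (1 : Matrix (Fin 2) (Fin 2) ℂ))
        + ∑ j, (((t' • s + t • s' + T'ᵀ.mulVec r + Tᵀ.mulVec r') j : ℂ)
              + Complex.I * ((crossProduct s s'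
                  + ∑ k : Fin 3, crossProduct (Tᵀ.mulVec (Pi.single k 1))
                      (T'ᵀ.mulVec (Pi.single k 1))) j : ℂ)) •
            ((1 : Matrix (Fin 2) (Fin 2) ℂ) ⊗ₖ pauli j)
        + ∑ i, ∑ j,
            (((t' • T + t • T' + Matrix.vecMulVec r s' + Matrix.vecMulVec r' s
                  - Omega T T') i j : ℂ)
              + Complex.I * ((Psi r T' s - Psi r' T s') i j : ℂ)) •
            (pauli i ⊗ₖ pauli j)) ∧
    (obs t r s T * obs t' r' s' T').trace =
      4 * ((t * t' + (∑ i, r i * r' i) + (∑ i, s i * s' i)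
            + (Tᵀ * T').trace : ℝ) : ℂ) := by
  constructor
  · ext ⟨a, b⟩ ⟨c, d⟩
    fin_cases a <;> fin_cases b <;> fin_cases c <;> fin_cases d <;>
      (simp [obs, pauli, Fmat, dotF, Omega, Psi, Matrix.mul_apply, Fintype.sum_prod_type,
        Fin.sum_univ_succ, crossProduct, Matrix.mulVec, Matrix.vecMulVec_apply, Matrix.trace,
        dotProduct, Matrix.one_apply, Pi.single_apply, Prod.ext_iff, Complex.ext_iff]) <;>
      constructor <;> ring
  · simp [obs, pauli, Matrix.trace, Matrix.diag, Matrix.mul_apply, Fintype.sum_prod_type,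
      Fin.sum_univ_succ, Matrix.one_apply, Prod.ext_iff, Complex.ext_iff]
    constructor <;> ring
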